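/- Let R be a commutative ring and M a free R-module of rank r with basis. Let ψ_1,…,ψ_{r−1} : M → R be R-linear maps such that Ψ = ⊕ψ_i : M → R^{r−1} is surjective with kernel L a free rank-one direct summand of M. Then the map φ := ψ_1 ∧ ψ_2 ∧ ⋯ ∧ ψ_{r−1} : ⋀^r M → M, defined by φ(m_1∧⋯∧m_r) = Σ_{k=1}^{r} (−1)^{k+1} det(ψ_i(m_j))_{j≠k} · m_k, maps ⋀^r M isomorphically onto L. -/

import Mathlib

/-!
Since `Ψ` maps onto the free module `R^n`, there are `q₀, …, q_{n-1}` with `ψᵢ(q_j) = δᵢⱼ`;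
together with the generator `x` of `L` they form a basis `c = (x, q₀, …, q_{n-1})` of `M`.
Every alternating map on a basis-indexed family is `det` times its value on the basis, so
`⋀^{n+1} M` is generated by `c₀ ∧ ⋯ ∧ c_n`. In the expansion of `φ` at this generator only the
`k = 0` term survives: its minor is the identity matrix, while every other minor contains the
zero column `(ψᵢ(x))ᵢ`. Hence `φ(a • c₀ ∧ ⋯ ∧ c_n) = a • x`, which is injective because `x` is
torsion-free, with image `R x = L`.
-/

open Module

theorem AlternatingMap.map_eq_basis_det_smul {R M N ι : Type*} [CommRing R] [AddCommGroup M]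
    [Module R M] [AddCommGroup N] [Module R N] [Fintype ι] [DecidableEq ι]
    (f : M [⋀^ι]→ₗ[R] N) (e : Basis ι R M) (v : ι → M) : f v = e.det v • f e := by
  suffices f = (LinearMap.toSpanSingleton R N (f e)).compAlternatingMap e.det from
    congr($this v)
  refine e.ext_alternating fun i hi => ?_
  let σ : Equiv.Perm ι := Equiv.ofBijective i (Finite.injective_iff_bijective.1 hi)
  change f (e ∘ σ) = (LinearMap.toSpanSingleton R N (f e)).compAlternatingMap e.det (e ∘ σ)
  simp [AlternatingMap.map_perm, Basis.det_self, Units.smul_def]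

theorem exteriorPower.span_ιMulti_basis_eq_top {R M : Type*} [CommRing R] [AddCommGroup M]
    [Module R M] {n : ℕ} (e : Basis (Fin n) R M) :
    Submodule.span R {exteriorPower.ιMulti R n e} = ⊤ := by
  rw [eq_top_iff, ← exteriorPower.ιMulti_span, Submodule.span_le]
  rintro - ⟨v, rfl⟩
  rw [(exteriorPower.ιMulti R n).map_eq_basis_det_smul e v]
  exact Submodule.smul_mem _ _ (Submodule.mem_span_singleton_self _)

section

variable {R M N : Type*} [Ring R] [AddCommGroup M] [Module R M] [AddCommGroup N] [Module R N]

theorem LinearMap.injective_of_span_singleton_eq_top {g : M →ₗ[R] N} {w : M}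
    (hw : Submodule.span R {w} = ⊤) (hgw : ∀ a : R, a • g w = 0 → a = 0) :
    Function.Injective g := by
  rw [← LinearMap.ker_eq_bot, eq_bot_iff]
  intro z hz
  obtain ⟨a, rfl⟩ := Submodule.mem_span_singleton.1 (hw ▸ Submodule.mem_top : z ∈ _)
  rw [LinearMap.mem_ker, map_smul] at hz
  simp [hgw a hz]

variable {n : ℕ} {f : M →ₗ[R] N} {x : M} {e : Basis (Fin n) R N} {q : Fin n → M}

theorem linearIndependent_finCons_of_ker_eq_span (hker : LinearMap.ker f = Submodule.span R {x})
    (hx : ∀ a : R, a • x = 0 → a = 0) (hq : ∀ j, f (q j) = e j) :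
    LinearIndependent R (Fin.cons x q : Fin (n + 1) → M) := by
  have hfq : f ∘ q = e := funext hq
  refine .finCons' x q (LinearIndependent.of_comp f (hfq ▸ e.linearIndependent)) ?_
  intro c y hy hxy
  obtain ⟨a, rfl⟩ := Submodule.mem_span_range_iff_exists_fun R |>.1 hy
  have hfx : f x = 0 := by
    rw [← LinearMap.mem_ker, hker]
    exact Submodule.mem_span_singleton_self x
  have ha : a = 0 := by
    have := congr(f $hxy)
    simp only [map_add, map_smul, hfx, smul_zero, zero_add, map_sum, hq, map_zero] at this
    exact funext (Fintype.linearIndependent_iff.1 e.linearIndependent a this)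
  exact hx c (by simpa [ha] using hxy)

theorem top_le_span_range_finCons_of_ker_eq_span
    (hker : LinearMap.ker f = Submodule.span R {x}) (hq : ∀ j, f (q j) = e j) :
    ⊤ ≤ Submodule.span R (Set.range (Fin.cons x q : Fin (n + 1) → M)) := by
  intro m _
  have hm : m - ∑ j, e.repr (f m) j • q j ∈ Submodule.span R {x} := by
    rw [← hker, LinearMap.mem_ker, map_sub, map_sum]
    simp only [map_smul, hq, e.sum_repr, sub_self]
  obtain ⟨a, ha⟩ := Submodule.mem_span_singleton.1 hm
  rw [← sub_add_cancel m (∑ j, e.repr (f m) j • q j), ← ha, Fin.range_cons]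
  refine add_mem (Submodule.smul_mem _ _ (Submodule.subset_span (Set.mem_insert x _))) ?_
  exact sum_mem fun j _ => Submodule.smul_mem _ _
    (Submodule.subset_span (Set.mem_insert_of_mem x ⟨j, rfl⟩))

noncomputable def Module.Basis.finConsOfKerEqSpan
    (hker : LinearMap.ker f = Submodule.span R {x}) (hx : ∀ a : R, a • x = 0 → a = 0)
    (hq : ∀ j, f (q j) = e j) : Basis (Fin (n + 1)) R M :=
  .mk (linearIndependent_finCons_of_ker_eq_span hker hx hq)
    (top_le_span_range_finCons_of_ker_eq_span hker hq)

@[simp]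
theorem Module.Basis.coe_finConsOfKerEqSpan (hker : LinearMap.ker f = Submodule.span R {x})
    (hx : ∀ a : R, a • x = 0 → a = 0) (hq : ∀ j, f (q j) = e j) :
    ⇑(Basis.finConsOfKerEqSpan hker hx hq) = Fin.cons x q :=
  Basis.coe_mk _ _

end

theorem sum_neg_one_pow_smul_det_smul_finCons_eq_head {R M : Type*} [CommRing R]
    [AddCommGroup M] [Module R M] {n : ℕ} {ψ : Fin n → M →ₗ[R] R} {x : M} {q : Fin n → M}
    (hx : ∀ i, ψ i x = 0) (hq : Matrix.of (fun i j => ψ i (q j)) = 1) :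
    ∑ k : Fin (n + 1), ((-1 : R) ^ (k : ℕ)) •
      (Matrix.of fun i j : Fin n => ψ i ((Fin.cons x q : Fin (n + 1) → M) (k.succAbove j))).det •
        (Fin.cons x q : Fin (n + 1) → M) k = x := by
  rw [Fin.sum_univ_succ, Finset.sum_eq_zero]
  · simp [hq]
  intro k _
  obtain ⟨j, hj⟩ := Fin.exists_succAbove_eq (Fin.succ_ne_zero k).symm
  rw [Matrix.det_eq_zero_of_column_eq_zero j fun i => by simp [hj, hx], zero_smul, smul_zero]

theorem wedge_of_functionals_maps_top_exterior_power_iso_onto_kernel_general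
    {R M : Type*} [CommRing R] [AddCommGroup M] [Module R M] (n : ℕ)
    (ψ : Fin n → (M →ₗ[R] R))
    (Ψ : M →ₗ[R] (Fin n → R)) (hΨ : Ψ = LinearMap.pi ψ)
    (hsurj : Function.Surjective Ψ)
    (hLfree : ∃ x : M, LinearMap.ker Ψ = Submodule.span R {x} ∧ ∀ a : R, a • x = 0 → a = 0)
    (φ : ↥(⋀[R]^(n + 1) M) →ₗ[R] M)
    (hφ : ∀ v : Fin (n + 1) → M,
      φ ⟨ExteriorAlgebra.ιMulti R (n + 1) v,
          ExteriorAlgebra.ιMulti_range R (n + 1) (Set.mem_range_self v)⟩ =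
        ∑ k : Fin (n + 1), ((-1 : R) ^ (k : ℕ)) •
          (Matrix.det (Matrix.of fun i j : Fin n => ψ i (v (Fin.succAbove k j)))) • v k) :
    Function.Injective φ ∧ LinearMap.range φ = LinearMap.ker Ψ := by
  subst hΨ
  obtain ⟨x, hker, hx⟩ := hLfree
  choose q hq using fun j => hsurj (Pi.basisFun R (Fin n) j)
  have hψx (i : Fin n) : ψ i x = 0 :=
    congr_fun (hker ▸ Submodule.mem_span_singleton_self x : x ∈ LinearMap.ker _) i
  have hψq : Matrix.of (fun i j => ψ i (q j)) = 1 := by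
    ext i j
    simpa [Matrix.one_apply, Pi.single_apply] using congr_fun (hq j) i
  set c := Basis.finConsOfKerEqSpan hker hx hq
  have hφc : φ (exteriorPower.ιMulti R (n + 1) c) = x := by
    rw [Basis.coe_finConsOfKerEqSpan]
    exact (hφ _).trans (sum_neg_one_pow_smul_det_smul_finCons_eq_head hψx hψq)
  have hspan := exteriorPower.span_ιMulti_basis_eq_top c
  refine ⟨LinearMap.injective_of_span_singleton_eq_top hspan (hφc ▸ hx), ?_⟩
  rw [LinearMap.range_eq_map, ← hspan, Submodule.map_span, Set.image_singleton, hφc, hker]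

/-- Let `R` be a commutative ring and `M` a free `R`-module of rank `r = n + 1` with a basis.
Let `ψ₀, …, ψ_{n-1} : M → R` be linear functionals such that `Ψ = ⊕ψᵢ : M → R^n` is
surjective with kernel `L` a free rank-one direct summand of `M`.  Then the map
`φ = ψ₀ ∧ ⋯ ∧ ψ_{n-1} : ⋀^{n+1} M → M`, characterized by
`φ(m₀∧⋯∧m_n) = Σ_k (−1)^k det(ψᵢ(m_j))_{j≠k} · m_k`, maps `⋀^{n+1} M` isomorphically
onto `L`. -/
theorem wedge_of_functionals_maps_top_exterior_power_iso_onto_kernel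
    {R M : Type*} [CommRing R] [AddCommGroup M] [Module R M] (n : ℕ)
    (b : Module.Basis (Fin (n + 1)) R M) (ψ : Fin n → (M →ₗ[R] R))
    (Ψ : M →ₗ[R] (Fin n → R)) (hΨ : Ψ = LinearMap.pi ψ)
    (hsurj : Function.Surjective Ψ)
    (hLfree : ∃ x : M, LinearMap.ker Ψ = Submodule.span R {x} ∧ ∀ a : R, a • x = 0 → a = 0)
    (hLsumm : ∃ Q : Submodule R M, IsCompl (LinearMap.ker Ψ) Q)
    (φ : ↥(⋀[R]^(n + 1) M) →ₗ[R] M)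
    (hφ : ∀ v : Fin (n + 1) → M,
      φ ⟨ExteriorAlgebra.ιMulti R (n + 1) v,
          ExteriorAlgebra.ιMulti_range R (n + 1) (Set.mem_range_self v)⟩ =
        ∑ k : Fin (n + 1), ((-1 : R) ^ (k : ℕ)) •
          (Matrix.det (Matrix.of fun i j : Fin n => ψ i (v (Fin.succAbove k j)))) • v k) :
    Function.Injective φ ∧ LinearMap.range φ = LinearMap.ker Ψ :=
  wedge_of_functionals_maps_top_exterior_power_iso_onto_kernel_general n ψ Ψ hΨ hsurj hLfree φ hφ
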